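/- Suppose i < n satisfies max(DY i) = α and cx(v) ≤ cy(v) for every value v with min(DY i) ≤ v < α. Then the value min(DY i) is consistent for Y_i (hence every value of DY i is consistent). -/
import Mathlib


namespace MsetPaper

/-- The maximum element of a multiset of naturals (`0` for the empty multiset). -/
def mmax (s : Multiset ℕ) : ℕ := s.sup

/-- The strict multiset order `x <ₘ y` of the paper: either `x` is empty and `y` is not,
or both are nonempty and either `max x < max y`, or the maxima agree and the multisets
with one occurrence of the maximum removed are again strictly ordered. -/
inductive MLt : Multiset ℕ → Multiset ℕ → Prop
  | empty {y : Multiset ℕ} : y ≠ 0 → MLt 0 y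
  | maxLt {x y : Multiset ℕ} : x ≠ 0 → y ≠ 0 → mmax x < mmax y → MLt x y
  | maxEq {x y : Multiset ℕ} : x ≠ 0 → y ≠ 0 → mmax x = mmax y →
      MLt (x.erase (mmax x)) (y.erase (mmax y)) → MLt x y

/-- The (non-strict) multiset order `x ≤ₘ y`. -/
def MLe (x y : Multiset ℕ) : Prop := MLt x y ∨ x = y

/-- The multiset of values taken by a vector. -/
def msetOf {n : ℕ} (x : Fin n → ℕ) : Multiset ℕ := (List.ofFn x : List ℕ)

/-- `(x, y)` is a satisfying assignment for the constraint `X ≤ₘ Y`. -/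
def SatLe {n : ℕ} (DX DY : Fin n → Finset ℕ) (x y : Fin n → ℕ) : Prop :=
  (∀ i, x i ∈ DX i) ∧ (∀ i, y i ∈ DY i) ∧ MLe (msetOf x) (msetOf y)

/-- The value `v` is consistent for the variable `X i`. -/
def ConsX {n : ℕ} (DX DY : Fin n → Finset ℕ) (i : Fin n) (v : ℕ) : Prop :=
  ∃ x y, SatLe DX DY x y ∧ x i = v

/-- The value `v` is consistent for the variable `Y i`. -/
def ConsY {n : ℕ} (DX DY : Fin n → Finset ℕ) (i : Fin n) (v : ℕ) : Prop :=
  ∃ x y, SatLe DX DY x y ∧ y i = v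

/-- The constraint `X ≤ₘ Y` is generalised arc-consistent. -/
def GACLe {n : ℕ} (DX DY : Fin n → Finset ℕ) : Prop :=
  (∀ i, ∀ v ∈ DX i, ConsX DX DY i v) ∧ (∀ i, ∀ v ∈ DY i, ConsY DX DY i v)

/-- `cx DX hDX v` counts the indices `i` with `min (DX i) = v`
(the occurrence vector of `floor(X)`). -/
def cx {n : ℕ} (DX : Fin n → Finset ℕ) (hDX : ∀ i, (DX i).Nonempty) (v : ℕ) : ℕ :=
  (Finset.univ.filter fun i => (DX i).min' (hDX i) = v).card

/-- `cy DY hDY v` counts the indices `i` with `max (DY i) = v`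
(the occurrence vector of `ceiling(Y)`). -/
def cy {n : ℕ} (DY : Fin n → Finset ℕ) (hDY : ∀ i, (DY i).Nonempty) (v : ℕ) : ℕ :=
  (Finset.univ.filter fun i => (DY i).max' (hDY i) = v).card

/- ----------------- auxiliary lemmas ----------------- -/

lemma mmax_mem {s : Multiset ℕ} (hs : s ≠ 0) : mmax s ∈ s := by
  induction s using Multiset.induction with
  | empty => simp at hs
  | cons a s ih =>
    by_cases h : s = 0
    · subst h; simp [mmax]
    · have hm := ih h
      unfold mmax at *
      simp only [Multiset.sup_cons]
      rcases le_total a s.sup with h1 | h1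
      · rw [sup_eq_right.mpr h1]; exact Multiset.mem_cons_of_mem hm
      · rw [sup_eq_left.mpr h1]; exact Multiset.mem_cons_self _ _

lemma mlt_of_count_aux (N : ℕ) : ∀ (y x : Multiset ℕ) (d : ℕ), Multiset.card y ≤ N →
    x.count d < y.count d → (∀ w, d < w → x.count w = y.count w) → MLt x y := by
  induction N with
  | zero =>
    intro y x d hcard hd _
    interval_cases h : Multiset.card y
    · rw [Multiset.card_eq_zero] at h; subst h; simp at hd
  | succ N ih =>
    intro y x d hcard hd habove
    have hy : y ≠ 0 := by
      intro h; subst h; simp at hd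
    by_cases hx : x = 0
    · exact hx ▸ MLt.empty hy
    · have hdy : d ∈ y := Multiset.count_pos.mp (by omega)
      have hdy' : d ≤ mmax y := Multiset.le_sup hdy
      have hmm : mmax x ≤ mmax y := by
        apply Multiset.sup_le.mpr
        intro e he
        by_cases h : d < e
        · refine Multiset.le_sup (Multiset.count_pos.mp ?_)
          rw [← habove e h]
          exact Multiset.count_pos.mpr he
        · omega
      rcases lt_or_eq_of_le hmm with h | h
      · exact MLt.maxLt hx hy h
      · apply MLt.maxEq hx hy h
        rw [← h]
        set m := mmax x with hm
        have hmx : m ∈ x := mmax_mem hx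
        have hmy : m ∈ y := by rw [h]; exact mmax_mem hy
        have hcard' : Multiset.card (y.erase m) ≤ N := by
          rw [Multiset.card_erase_of_mem hmy, Nat.pred_eq_sub_one]
          have : 1 ≤ Multiset.card y := Multiset.card_pos.mpr hy
          omega
        have hdm : d ≤ m := le_trans hdy' (le_of_eq h.symm)
        have hcx : 1 ≤ x.count m := Multiset.count_pos.mpr hmx
        rcases eq_or_lt_of_le hdm with rfl | hlt
        · apply ih _ _ m hcard'
          · rw [Multiset.count_erase_self, Multiset.count_erase_self]; omega
          · intro w hw
            rw [Multiset.count_erase_of_ne (by omega), Multiset.count_erase_of_ne (by omega)]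
            exact habove w hw
        · apply ih _ _ d hcard'
          · rw [Multiset.count_erase_of_ne (by omega), Multiset.count_erase_of_ne (by omega)]
            exact hd
          · intro w hw
            by_cases hwm : w = m
            · subst hwm
              rw [Multiset.count_erase_self, Multiset.count_erase_self, habove m hw]
            · rw [Multiset.count_erase_of_ne hwm, Multiset.count_erase_of_ne hwm]
              exact habove w hw

lemma mlt_of_count {x y : Multiset ℕ} {d : ℕ}
    (hd : x.count d < y.count d) (habove : ∀ w, d < w → x.count w = y.count w) : MLt x y :=
  mlt_of_count_aux (Multiset.card y) y x d le_rfl hd habove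

lemma msetOf_eq {n : ℕ} (x : Fin n → ℕ) : msetOf x = Multiset.map x Finset.univ.val := by
  simp [msetOf, List.ofFn_eq_map, Fin.univ_def, Multiset.map_coe]

lemma count_msetOf {n : ℕ} (x : Fin n → ℕ) (w : ℕ) :
    (msetOf x).count w = (Finset.univ.filter fun j => x j = w).card := by
  rw [msetOf_eq, Multiset.count_map, Finset.card, Finset.filter_val]
  simp [eq_comm]

lemma consY_general (n : ℕ) (DX DY : Fin n → Finset ℕ)
    (hDX : ∀ i, (DX i).Nonempty) (hDY : ∀ i, (DY i).Nonempty)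
    (α : ℕ)
    (hα1 : cx DX hDX α < cy DY hDY α)
    (hα2 : ∀ b : ℕ, α < b → cx DX hDX b = cy DY hDY b)
    (i : Fin n) (hmax : (DY i).max' (hDY i) = α)
    (hmin : ∀ v : ℕ, (DY i).min' (hDY i) ≤ v → v < α → cx DX hDX v ≤ cy DY hDY v)
    (v : ℕ) (hv : v ∈ DY i) : ConsY DX DY i v := by
  classical
  set X : Fin n → ℕ := fun j => (DX j).min' (hDX j) with hXdef
  set Y : Fin n → ℕ := fun j => if j = i then v else (DY j).max' (hDY j) with hYdef
  have hvα : v ≤ α := hmax ▸ Finset.le_max' _ _ hv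
  have hvmin : (DY i).min' (hDY i) ≤ v := Finset.min'_le _ _ hv
  -- counts of X
  have cX : ∀ w, (msetOf X).count w = cx DX hDX w := by
    intro w; rw [count_msetOf]; rfl
  -- counts of Y
  have cYc : ∀ w, (msetOf Y).count w + (if α = w then 1 else 0)
      = cy DY hDY w + (if v = w then 1 else 0) := by
    intro w
    rw [count_msetOf]
    unfold cy
    rw [Finset.card_filter, Finset.card_filter,
        ← Finset.sum_erase_add _ _ (Finset.mem_univ i),
        ← Finset.sum_erase_add _ _ (Finset.mem_univ i)]
    have hc : ∀ j ∈ Finset.univ.erase i,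
        (if Y j = w then 1 else 0) = (if (DY j).max' (hDY j) = w then 1 else 0) := by
      intro j hj
      have hji : j ≠ i := Finset.ne_of_mem_erase hj
      simp [hYdef, hji]
    rw [Finset.sum_congr rfl hc]
    simp only [hYdef, if_pos rfl, hmax]
    ring
  refine ⟨X, Y, ⟨fun j => Finset.min'_mem _ _, fun j => ?_, ?_⟩, by simp [hYdef]⟩
  · by_cases h : j = i
    · subst h; simpa [hYdef] using hv
    · simpa [hYdef, h] using Finset.max'_mem _ (hDY j)
  · -- the order constraint
    by_cases heq : msetOf X = msetOf Y
    · exact Or.inr heq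
    · left
      have hcount : ∀ w, α < w → (msetOf X).count w = (msetOf Y).count w := by
        intro w hw
        have h1 := cYc w
        rw [if_neg (by omega), if_neg (by omega)] at h1
        rw [cX, hα2 w hw]
        omega
      have hne : ∃ w, (msetOf X).count w ≠ (msetOf Y).count w := by
        by_contra h
        push_neg at h
        exact heq (Multiset.ext.mpr h)
      obtain ⟨w₀, hw₀⟩ := hne
      have hw₀α : w₀ ≤ α := by
        by_contra h
        exact hw₀ (hcount w₀ (by omega))
      set S := (Finset.range (α+1)).filter
        (fun w => (msetOf X).count w ≠ (msetOf Y).count w) with hSdef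
      have hSne : S.Nonempty := ⟨w₀, by simp [hSdef, Finset.mem_filter, Finset.mem_range]; omega⟩
      obtain ⟨d, hdmax⟩ : ∃ d, S.max' hSne = d := ⟨_, rfl⟩
      have hdS : d ∈ S := hdmax ▸ S.max'_mem hSne
      rw [hSdef, Finset.mem_filter, Finset.mem_range] at hdS
      obtain ⟨hdα, hdne⟩ := hdS
      have habove : ∀ w, d < w → (msetOf X).count w = (msetOf Y).count w := by
        intro w hw
        by_cases h : w ≤ α
        · by_contra hne'
          have hwS : w ∈ S := by
            rw [hSdef, Finset.mem_filter, Finset.mem_range]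
            exact ⟨by omega, hne'⟩
          have hle := S.le_max' w hwS
          rw [hdmax] at hle
          omega
        · exact hcount w (by omega)
      refine mlt_of_count (d := d) ?_ habove
      have hcYd := cYc d
      have hXd := cX d
      by_cases hdv : d = α
      · subst hdv
        rw [if_pos rfl] at hcYd
        by_cases hva : v = d
        · rw [if_pos hva] at hcYd; omega
        · rw [if_neg hva] at hcYd; omega
      · have hdα' : d < α := by omega
        rw [if_neg (by omega)] at hcYd
        by_cases hvd : v ≤ d
        · have hcxcy : cx DX hDX d ≤ cy DY hDY d := hmin d (by omega) hdα'
          by_cases hva : v = d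
          · rw [if_pos hva] at hcYd; omega
          · rw [if_neg hva] at hcYd; omega
        · -- d < v : derive a contradiction
          exfalso
          have h1 := habove v (by omega)
          have h2 := cYc v
          rw [if_pos rfl] at h2
          have hXv := cX v
          by_cases hva : v = α
          · subst hva
            rw [if_pos rfl] at h2
            omega
          · have hvα' : v < α := by omega
            rw [if_neg (by omega)] at h2
            have := hmin v hvmin hvα'
            omega

/-- If `max(DY i) = α` and `cx v ≤ cy v` for every `min(DY i) ≤ v < α`, then
`min(DY i)` is consistent (hence every value of `DY i` is). -/
theorem stmt13 (n : ℕ) (hn : 1 ≤ n) (DX DY : Fin n → Finset ℕ)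
    (hDX : ∀ i, (DX i).Nonempty) (hDY : ∀ i, (DY i).Nonempty)
    (α : ℕ)
    (hα1 : cx DX hDX α < cy DY hDY α)
    (hα2 : ∀ b : ℕ, α < b → cx DX hDX b = cy DY hDY b)
    (i : Fin n) (hmax : (DY i).max' (hDY i) = α)
    (hmin : ∀ v : ℕ, (DY i).min' (hDY i) ≤ v → v < α → cx DX hDX v ≤ cy DY hDY v) :
    ConsY DX DY i ((DY i).min' (hDY i)) ∧ ∀ v ∈ DY i, ConsY DX DY i v := by
  refine ⟨?_, ?_⟩
  · exact consY_general n DX DY hDX hDY α hα1 hα2 i hmax hmin _ (Finset.min'_mem _ _)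
  · exact fun v hv => consY_general n DX DY hDX hDY α hα1 hα2 i hmax hmin v hv

end MsetPaper
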